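/- Let K be a fixed conjunction of rank d over n variables (1 ≤ d ≤ n) and k ≥ 1 with k ≤ 2^n − 2^{n−d}. The fraction of functions f in P_k^n for which K is a prime implicant of f is at most (k · 2^{1−d})^d. -/

import Mathlib

open scoped Classical

/-- A conjunction (term) over `n` Boolean variables: a support set `supp ⊆ Fin n`
together with a sign assignment `sgn` (only its values on `supp` matter). -/
structure Conj (n : ℕ) where
  supp : Finset (Fin n)
  sgn : Fin n → Bool

/-- The rank of a conjunction: the number of literals, i.e. `|supp|`. -/
def Conj.rank {n : ℕ} (K : Conj n) : ℕ := K.supp.card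

/-- A conjunction covers a point `x` if `x` agrees with the sign assignment on the support. -/
def Conj.covers {n : ℕ} (K : Conj n) (x : Fin n → Bool) : Prop :=
  ∀ i ∈ K.supp, x i = K.sgn i

/-- `K` is an implicant of `f` if every point covered by `K` is a one of `f`. -/
def Implicant {n : ℕ} (K : Conj n) (f : (Fin n → Bool) → Bool) : Prop :=
  ∀ x, K.covers x → f x = true

/-- `K` is a prime implicant of `f` if it is an implicant of `f` and deleting
any coordinate of its support yields a conjunction which is not an implicant of `f`. -/
def PrimeImplicant {n : ℕ} (K : Conj n) (f : (Fin n → Bool) → Bool) : Prop :=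
  Implicant K f ∧ ∀ i ∈ K.supp, ¬ Implicant ⟨K.supp.erase i, K.sgn⟩ f

/-- The number of zeros of a Boolean function on `n` variables. -/
def zerosCard {n : ℕ} (f : (Fin n → Bool) → Bool) : ℕ :=
  (Finset.univ.filter (fun x => f x = false)).card

/-- `P_k^n`: the (finite) class of Boolean functions on `n` variables with exactly `k` zeros. -/
def Pclass (n k : ℕ) : Finset ((Fin n → Bool) → Bool) :=
  Finset.univ.filter (fun f => zerosCard f = k)

/-- `D` is a DNF realization of `f`: `f x = true` iff some conjunction of `D` covers `x`. -/
def IsDNF {n : ℕ} (f : (Fin n → Bool) → Bool) (D : Finset (Conj n)) : Prop :=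
  ∀ x, f x = true ↔ ∃ K ∈ D, K.covers x

/-- The fraction of functions in `P_k^n` satisfying property `P`. -/
noncomputable def frac (n k : ℕ) (P : ((Fin n → Bool) → Bool) → Prop) : ℝ :=
  (((Pclass n k).filter P).card : ℝ) / ((Pclass n k).card : ℝ)

/-! Sending a function to its set of zeros identifies `P_k^n` with the `k`-subsets of the cube,
of which there are `C(2^n, k)`. If `K` is a prime implicant of `f`, the zero set of `f` meets each
of the `d` pairwise disjoint subcubes adjacent to `K`, each of size `2^(n-d)`. Choosing one zero in
each of them and then the remaining `k - d` zeros bounds the number of such zero sets by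
`2^((n-d)d) C(2^n - d, k - d)`, and
`C(2^n - d, k - d) / C(2^n, k) = C(k, d) / C(2^n, d) ≤ (k/2^n)^d`.
So the fraction is at most `(k 2^(-d))^d`. -/

open Finset Function

namespace Nat

lemma descFactorial_mul_pow_le_of_le {k N : ℕ} (d : ℕ) (hkN : k ≤ N) :
    k.descFactorial d * N ^ d ≤ N.descFactorial d * k ^ d := by
  induction d with
  | zero => simp
  | succ d ih =>
    have hstep : (k - d) * N ≤ (N - d) * k := by
      rw [Nat.sub_mul, Nat.sub_mul, Nat.mul_comm k N]
      exact Nat.sub_le_sub_left (Nat.mul_le_mul_left d hkN) _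
    calc k.descFactorial (d + 1) * N ^ (d + 1)
        = ((k - d) * N) * (k.descFactorial d * N ^ d) := by
          rw [descFactorial_succ, pow_succ]; ring
      _ ≤ ((N - d) * k) * (N.descFactorial d * k ^ d) := Nat.mul_le_mul hstep ih
      _ = N.descFactorial (d + 1) * k ^ (d + 1) := by
          rw [descFactorial_succ, pow_succ]; ring

lemma choose_mul_pow_le_of_le {k N : ℕ} (d : ℕ) (hkN : k ≤ N) :
    k.choose d * N ^ d ≤ N.choose d * k ^ d := by
  have h := descFactorial_mul_pow_le_of_le d hkN
  rw [descFactorial_eq_factorial_mul_choose, descFactorial_eq_factorial_mul_choose,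
    mul_assoc, mul_assoc] at h
  exact Nat.le_of_mul_le_mul_left h (factorial_pos d)

lemma choose_sub_mul_pow_le {d k N : ℕ} (hdk : d ≤ k) (hkN : k ≤ N) :
    (N - d).choose (k - d) * N ^ d ≤ N.choose k * k ^ d := by
  refine Nat.le_of_mul_le_mul_right ?_ (choose_pos hdk)
  calc (N - d).choose (k - d) * N ^ d * k.choose d
      = (N - d).choose (k - d) * (k.choose d * N ^ d) := by ring
    _ ≤ (N - d).choose (k - d) * (N.choose d * k ^ d) :=
        Nat.mul_le_mul_left _ (choose_mul_pow_le_of_le d hkN)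
    _ = N.choose d * (N - d).choose (k - d) * k ^ d := by ring
    _ = N.choose k * k ^ d * k.choose d := by rw [← choose_mul hdk]; ring

end Nat

namespace Finset

variable {α ι : Type*}

lemma injective_of_pairwise_disjoint {Q : ι → Finset α} (hQ : Pairwise (Disjoint on Q))
    {z : ι → α} (hz : ∀ i, z i ∈ Q i) : Injective z := by
  intro i j hij
  by_contra hne
  exact disjoint_left.mp (hQ hne) (hz i) (hij ▸ hz j)

variable [DecidableEq α] [Fintype ι] {Q : ι → Finset α}

lemma card_le_card_of_forall_inter_nonempty (hQ : Pairwise (Disjoint on Q)) {Z : Finset α}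
    (hZ : ∀ i, (Z ∩ Q i).Nonempty) : Fintype.card ι ≤ #Z := by
  choose z hz using hZ
  have hinj := injective_of_pairwise_disjoint hQ fun i => (mem_inter.mp (hz i)).2
  exact card_le_card_of_injOn z (fun i _ => (mem_inter.mp (hz i)).1) hinj.injOn

variable [Fintype α]

lemma card_filter_powersetCard_superset_le (T : Finset α) (k : ℕ) :
    #{Z ∈ powersetCard k univ | T ⊆ Z} ≤ (Fintype.card α - #T).choose (k - #T) := by
  calc #{Z ∈ powersetCard k univ | T ⊆ Z} ≤ #(powersetCard (k - #T) (univ \ T)) := by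
        refine card_le_card_of_injOn (· \ T) (fun Z hZ => ?_) (fun Z hZ Z' hZ' h => ?_)
        · rw [mem_coe, mem_filter, mem_powersetCard] at hZ
          rw [mem_coe, mem_powersetCard, card_sdiff_of_subset hZ.2, hZ.1.2]
          exact ⟨sdiff_subset_sdiff (subset_univ Z) le_rfl, rfl⟩
        · rw [mem_coe, mem_filter] at hZ hZ'
          rw [← sdiff_union_of_subset hZ.2, ← sdiff_union_of_subset hZ'.2]
          exact congrArg (· ∪ T) h
    _ = (Fintype.card α - #T).choose (k - #T) := by rw [card_powersetCard, card_univ_sdiff]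

lemma card_filter_forall_inter_nonempty_le (hQ : Pairwise (Disjoint on Q)) {m : ℕ}
    (hm : ∀ i, #(Q i) ≤ m) (k : ℕ) :
    #{Z ∈ powersetCard k univ | ∀ i, (Z ∩ Q i).Nonempty}
      ≤ m ^ Fintype.card ι *
          (Fintype.card α - Fintype.card ι).choose (k - Fintype.card ι) := by
  have hcover : {Z ∈ powersetCard k (univ : Finset α) | ∀ i, (Z ∩ Q i).Nonempty} ⊆
      (Fintype.piFinset Q).biUnion fun z : ι → α =>
        {Z ∈ powersetCard k univ | univ.image z ⊆ Z} := by
    intro Z hZ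
    rw [mem_filter] at hZ
    choose z hz using hZ.2
    refine mem_biUnion.mpr ⟨z, Fintype.mem_piFinset.mpr fun i => (mem_inter.mp (hz i)).2, ?_⟩
    refine mem_filter.mpr ⟨hZ.1, fun x hx => ?_⟩
    obtain ⟨i, -, rfl⟩ := mem_image.mp hx
    exact (mem_inter.mp (hz i)).1
  calc _ ≤ _ := card_le_card hcover
    _ ≤ #(Fintype.piFinset Q) *
          (Fintype.card α - Fintype.card ι).choose (k - Fintype.card ι) := by
      refine card_biUnion_le_card_mul _ _ _ fun z hz => ?_
      have hinj := injective_of_pairwise_disjoint hQ (Fintype.mem_piFinset.mp hz)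
      simpa [card_image_of_injective _ hinj] using
        card_filter_powersetCard_superset_le (univ.image z) k
    _ ≤ _ := by
      gcongr
      rw [Fintype.card_piFinset, ← card_univ]
      exact prod_le_pow_card _ _ _ fun i _ => hm i

lemma card_filter_forall_inter_nonempty_mul_pow_le (hQ : Pairwise (Disjoint on Q)) {m : ℕ}
    (hm : ∀ i, #(Q i) ≤ m) {k : ℕ} (hk : k ≤ Fintype.card α) :
    #{Z ∈ powersetCard k univ | ∀ i, (Z ∩ Q i).Nonempty} * Fintype.card α ^ Fintype.card ι
      ≤ (Fintype.card α).choose k * (k * m) ^ Fintype.card ι := by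
  set N := Fintype.card α
  set d := Fintype.card ι
  rcases le_or_gt d k with hdk | hkd
  · calc _ ≤ m ^ d * (N - d).choose (k - d) * N ^ d :=
          Nat.mul_le_mul_right _ (card_filter_forall_inter_nonempty_le hQ hm k)
      _ ≤ m ^ d * (N.choose k * k ^ d) := by
          rw [mul_assoc]; exact Nat.mul_le_mul_left _ (Nat.choose_sub_mul_pow_le hdk hk)
      _ = N.choose k * (k * m) ^ d := by ring
  · have hempty :
        {Z ∈ powersetCard k (univ : Finset α) | ∀ i, (Z ∩ Q i).Nonempty} = ∅ := by
      refine filter_eq_empty_iff.mpr fun Z hZ hmeet => ?_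
      have := card_le_card_of_forall_inter_nonempty hQ hmeet
      rw [(mem_powersetCard.mp hZ).2] at this
      omega
    simp [hempty]

end Finset

namespace Conj

variable {n : ℕ}

def flip (K : Conj n) (i : Fin n) : Conj n := ⟨K.supp, update K.sgn i (!K.sgn i)⟩

def cube (K : Conj n) : Finset (Fin n → Bool) :=
  Fintype.piFinset fun i => if i ∈ K.supp then {K.sgn i} else univ

lemma mem_cube {K : Conj n} {x : Fin n → Bool} : x ∈ K.cube ↔ K.covers x := by
  simp only [cube, Fintype.mem_piFinset, covers]
  refine forall_congr' fun i => ?_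
  by_cases hi : i ∈ K.supp <;> simp [hi]

lemma card_cube (K : Conj n) : #K.cube = 2 ^ (n - K.rank) := by
  rw [cube, Fintype.card_piFinset, prod_congr rfl fun i _ => apply_ite card .., prod_ite]
  simp [rank, filter_not, card_univ_sdiff]

lemma disjoint_cube_flip {K : Conj n} {i j : Fin n} (hj : j ∈ K.supp) (hij : i ≠ j) :
    Disjoint (K.flip i).cube (K.flip j).cube := by
  refine disjoint_left.mpr fun x hxi hxj => ?_
  have h₁ := mem_cube.mp hxi j hj
  have h₂ := mem_cube.mp hxj j hj
  simp only [flip, update_of_ne hij.symm, update_self] at h₁ h₂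
  exact Bool.not_ne_self _ (h₂.symm.trans h₁)

end Conj

lemma PrimeImplicant.exists_covers_flip_eq_false {n : ℕ} {K : Conj n}
    {f : (Fin n → Bool) → Bool} (h : PrimeImplicant K f) {i : Fin n} (hi : i ∈ K.supp) :
    ∃ x, (K.flip i).covers x ∧ f x = false := by
  obtain ⟨x, hx, hfx⟩ : ∃ x, (∀ j ∈ K.supp.erase i, x j = K.sgn j) ∧ f x ≠ true := by
    simpa [Implicant, Conj.covers] using h.2 i hi
  have hxi : x i ≠ K.sgn i := fun hxi =>
    hfx (h.1 x fun j hj => if hji : j = i then hji ▸ hxi else hx j (mem_erase.mpr ⟨hji, hj⟩))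
  refine ⟨x, fun j hj => ?_, by simpa using hfx⟩
  by_cases hji : j = i
  · subst hji
    simpa [Conj.flip, Bool.eq_not_iff] using hxi
  · simpa [Conj.flip, hji] using hx j (mem_erase.mpr ⟨hji, hj⟩)

section ZeroSet

variable {n : ℕ}

def zeroSet (f : (Fin n → Bool) → Bool) : Finset (Fin n → Bool) := {x | f x = false}

lemma mem_zeroSet {f : (Fin n → Bool) → Bool} {x : Fin n → Bool} :
    x ∈ zeroSet f ↔ f x = false := by
  simp [zeroSet]

lemma zeroSet_injective : Injective (zeroSet (n := n)) := by
  intro f g h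
  funext x
  simpa [mem_zeroSet] using congrArg (x ∈ ·) h

lemma card_Pclass (n k : ℕ) : #(Pclass n k) = (2 ^ n).choose k := by
  have hchoose : (2 ^ n).choose k = #(powersetCard k (univ : Finset (Fin n → Bool))) := by
    simp
  rw [hchoose]
  refine card_nbij' zeroSet (fun Z x => decide (x ∉ Z)) (fun f hf => ?_) (fun Z hZ => ?_)
    (fun f _ => ?_) (fun Z _ => ?_)
  · rw [mem_coe, Pclass, mem_filter] at hf
    rw [mem_coe, mem_powersetCard]
    exact ⟨subset_univ _, hf.2⟩
  · rw [mem_coe, mem_powersetCard] at hZ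
    rw [mem_coe, Pclass, mem_filter, zerosCard]
    simpa using hZ.2
  · funext x; cases h : f x <;> simp [mem_zeroSet, h]
  · ext x; simp [mem_zeroSet]

end ZeroSet

lemma zeroSet_mem_of_primeImplicant {n k : ℕ} {K : Conj n} {f : (Fin n → Bool) → Bool}
    (hf : f ∈ Pclass n k) (hK : PrimeImplicant K f) :
    zeroSet f ∈ {Z ∈ powersetCard k (univ : Finset (Fin n → Bool)) |
      ∀ i : K.supp, (Z ∩ (K.flip i).cube).Nonempty} := by
  refine mem_filter.mpr
    ⟨mem_powersetCard.mpr ⟨subset_univ _, (mem_filter.mp hf).2⟩, fun i => ?_⟩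
  obtain ⟨x, hx, hfx⟩ := hK.exists_covers_flip_eq_false i.2
  exact ⟨x, mem_inter.mpr ⟨mem_zeroSet.mpr hfx, Conj.mem_cube.mpr hx⟩⟩

lemma frac_primeImplicant_le {n k : ℕ} (K : Conj n) (hk : k ≤ 2 ^ n) :
    frac n k (fun f => PrimeImplicant K f) ≤ ((k : ℝ) * 2 ^ (n - K.rank) / 2 ^ n) ^ K.rank := by
  have hdisj : Pairwise (Disjoint on fun i : K.supp => (K.flip i).cube) :=
    fun i j hij => Conj.disjoint_cube_flip j.2 (Subtype.coe_ne_coe.mpr hij)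
  have hcount := card_filter_forall_inter_nonempty_mul_pow_le hdisj (m := 2 ^ (n - K.rank))
    (fun i => (Conj.card_cube (K.flip i)).le) (k := k) (by simpa using hk)
  simp only [Fintype.card_coe, Fintype.card_fun, Fintype.card_bool, Fintype.card_fin,
    ← Conj.rank.eq_1] at hcount
  have hprime : #((Pclass n k).filter fun f => PrimeImplicant K f)
      ≤ #{Z ∈ powersetCard k univ | ∀ i : K.supp, (Z ∩ (K.flip i).cube).Nonempty} :=
    card_le_card_of_injOn zeroSet
      (fun f hf => zeroSet_mem_of_primeImplicant (mem_filter.mp hf).1 (mem_filter.mp hf).2)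
      zeroSet_injective.injOn
  have hnat := (Nat.mul_le_mul_right _ hprime).trans hcount
  rw [frac, card_Pclass, div_le_iff₀ (by exact_mod_cast Nat.choose_pos hk), div_pow,
    div_mul_eq_mul_div, le_div_iff₀ (by positivity)]
  exact_mod_cast hnat.trans_eq (mul_comm _ _)

theorem stmt3_general (n d k : ℕ) (hdn : d ≤ n)
    (K : Conj n) (hK : K.rank = d)
    (hk2 : k ≤ 2 ^ n - 2 ^ (n - d)) :
    frac n k (fun f => PrimeImplicant K f) ≤ ((k : ℝ) * (2 : ℝ) ^ ((1 : ℤ) - (d : ℤ))) ^ d := by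
  have hbound := hK ▸ frac_primeImplicant_le K (hk2.trans (Nat.sub_le _ _))
  refine hbound.trans (pow_le_pow_left₀ (by positivity) ?_ d)
  have hscale : (2 : ℝ) ^ (n - d) / 2 ^ n ≤ 2 ^ ((1 : ℤ) - d) := by
    rw [← zpow_natCast, ← zpow_natCast, ← zpow_sub₀ two_ne_zero, Nat.cast_sub hdn]
    exact zpow_le_zpow_right₀ one_le_two (by omega)
  rw [mul_div_assoc]
  gcongr

/-- For a fixed conjunction `K` of rank `d`, the fraction of functions in `P_k^n`
for which `K` is a prime implicant is at most `(k · 2^(1−d))^d`. -/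
theorem stmt3 (n d k : ℕ) (hn : 1 ≤ n) (hd1 : 1 ≤ d) (hdn : d ≤ n)
    (K : Conj n) (hK : K.rank = d)
    (hk1 : 1 ≤ k) (hk2 : k ≤ 2 ^ n - 2 ^ (n - d)) :
    frac n k (fun f => PrimeImplicant K f) ≤ ((k : ℝ) * (2 : ℝ) ^ ((1 : ℤ) - (d : ℤ))) ^ d :=
  stmt3_general n d k hdn K hK hk2
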